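/- arXiv:2310.00449 — 3 statements merged into one kernel-verified Lean document; each statement's English description precedes it below -/
import Mathlib

section
/- For no choice of two distinct elements a, b from the set {x₁(x₁⁴+x₂³), x₂(x₁⁴+x₂³), x₁³x₂²} is (a,b) a regular sequence in ℚ[x₁,x₂]. -/
open MvPolynomial

/-- `(a₁, a₂)` is a regular sequence in the commutative ring `R`:
`a₁` is not a zero divisor in `R`, and the image of `a₂` is not a zero divisor
in `R ⧸ (a₁)`. -/
def IsRegularPair {R : Type*} [CommRing R] (a₁ a₂ : R) : Prop :=
  (∀ c : R, a₁ * c = 0 → c = 0) ∧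
    (∀ c : R ⧸ Ideal.span {a₁},
      Ideal.Quotient.mk (Ideal.span {a₁}) a₂ * c = 0 → c = 0)

lemma not_reg_of_dvd {R : Type*} [CommRing R] {a b c : R}
    (h1 : a ∣ b * c) (h2 : ¬ a ∣ c) : ¬ IsRegularPair a b := by
  rintro ⟨-, hr⟩
  have := hr (Ideal.Quotient.mk _ c) (by
    rw [← map_mul, Ideal.Quotient.eq_zero_iff_mem, Ideal.mem_span_singleton]; exact h1)
  rw [Ideal.Quotient.eq_zero_iff_mem, Ideal.mem_span_singleton] at this
  exact h2 this

lemma nondvd_aux {a c : MvPolynomial (Fin 2) ℚ} (v : Fin 2 → Polynomial ℚ)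
    {p q : Polynomial ℚ} (ha : aeval v a = p) (hc : aeval v c = q)
    (hq : q ≠ 0) (hdeg : q.natDegree < p.natDegree) : ¬ a ∣ c := by
  intro h
  have hd : p ∣ q := ha ▸ hc ▸ map_dvd (aeval v) h
  exact absurd (Polynomial.natDegree_le_of_dvd hd hq) (not_le.mpr hdeg)

/-- For no choice of two distinct elements a, b from
{x₁(x₁⁴+x₂³), x₂(x₁⁴+x₂³), x₁³x₂²} is (a,b) a regular sequence in ℚ[x₁,x₂]. -/
theorem stmt6 :
    ∀ a b : MvPolynomial (Fin 2) ℚ,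
      a ∈ ({X 0 * ((X 0) ^ 4 + (X 1) ^ 3), X 1 * ((X 0) ^ 4 + (X 1) ^ 3), (X 0) ^ 3 * (X 1) ^ 2} : Set (MvPolynomial (Fin 2) ℚ)) →
      b ∈ ({X 0 * ((X 0) ^ 4 + (X 1) ^ 3), X 1 * ((X 0) ^ 4 + (X 1) ^ 3), (X 0) ^ 3 * (X 1) ^ 2} : Set (MvPolynomial (Fin 2) ℚ)) →
      a ≠ b → ¬ IsRegularPair a b := by
  intro a b ha hb hne
  simp only [Set.mem_insert_iff, Set.mem_singleton_iff] at ha hb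
  have hX : (Polynomial.X : Polynomial ℚ) ≠ 0 := Polynomial.X_ne_zero
  rcases ha with rfl | rfl | rfl <;> rcases hb with rfl | rfl | rfl
  · exact absurd rfl hne
  · -- a = f, b = g, c = x
    refine not_reg_of_dvd (c := X 0) ⟨X 1, by ring⟩ ?_
    refine nondvd_aux (p := Polynomial.X^5) (q := Polynomial.X) ![Polynomial.X, 0] ?_ ?_ hX ?_
    · simp; ring
    · simp
    · simp
  · -- a = f, b = h, c = x⁴+y³
    refine not_reg_of_dvd (c := (X 0)^4 + (X 1)^3) ⟨(X 0)^2 * (X 1)^2, by ring⟩ ?_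
    refine nondvd_aux (p := Polynomial.X^5) (q := Polynomial.X^4) ![Polynomial.X, 0] ?_ ?_ (pow_ne_zero _ hX) ?_
    · simp; ring
    · simp
    · simp
  · -- a = g, b = f, c = y
    refine not_reg_of_dvd (c := X 1) ⟨X 0, by ring⟩ ?_
    refine nondvd_aux (p := Polynomial.X^4) (q := Polynomial.X) ![0, Polynomial.X] ?_ ?_ hX ?_
    · simp; ring
    · simp
    · simp
  · exact absurd rfl hne
  · -- a = g, b = h, c = x⁴+y³
    refine not_reg_of_dvd (c := (X 0)^4 + (X 1)^3) ⟨(X 0)^3 * X 1, by ring⟩ ?_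
    refine nondvd_aux (p := Polynomial.X^4) (q := Polynomial.X^3) ![0, Polynomial.X] ?_ ?_ (pow_ne_zero _ hX) ?_
    · simp; ring
    · simp
    · simp
  · -- a = h, b = f, c = x²y²
    refine not_reg_of_dvd (c := (X 0)^2 * (X 1)^2) ⟨(X 0)^4 + (X 1)^3, by ring⟩ ?_
    refine nondvd_aux (p := Polynomial.X^3) (q := Polynomial.X^2) ![Polynomial.X, 1] ?_ ?_ (pow_ne_zero _ hX) ?_
    · simp
    · simp
    · simp
  · -- a = h, b = g, c = x³y
    refine not_reg_of_dvd (c := (X 0)^3 * X 1) ⟨(X 0)^4 + (X 1)^3, by ring⟩ ?_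
    refine nondvd_aux (p := Polynomial.X^2) (q := Polynomial.X) ![1, Polynomial.X] ?_ ?_ hX ?_
    · simp
    · simp
    · simp
  · exact absurd rfl hne
end

section
/- The pair (x₁³x₂², x₁(x₁⁴+x₂³) + x₂(x₁⁴+x₂³)) is a regular sequence in ℚ[x₁,x₂]. -/
open MvPolynomial

/-! The generators are relatively prime: `x₁` and `x₂` are prime, and neither divides `a₂`,
since setting `x₁ = 0` leaves `x₂⁴` and setting `x₂ = 0` leaves `x₁⁵`. In a domain where every
element is primal (e.g. a UFD), `a₁ ∣ a₂ c` with `a₁, a₂` relatively prime forces `a₁ ∣ c`. -/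

theorem isRegularPair_of_isRelPrime {R : Type*} [CommRing R] [IsDomain R]
    [DecompositionMonoid R] {a₁ a₂ : R} (ha₁ : a₁ ≠ 0) (h : IsRelPrime a₁ a₂) :
    IsRegularPair a₁ a₂ := by
  refine ⟨fun c hc ↦ (mul_eq_zero.mp hc).resolve_left ha₁, fun c hc ↦ ?_⟩
  obtain ⟨d, rfl⟩ := Ideal.Quotient.mk_surjective c
  rw [← map_mul, Ideal.Quotient.eq_zero_iff_mem, Ideal.mem_span_singleton] at hc
  rw [Ideal.Quotient.eq_zero_iff_mem, Ideal.mem_span_singleton]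
  exact h.dvd_of_dvd_mul_left hc

theorem MvPolynomial.not_X_dvd_of_aeval_update_ne_zero {R σ : Type*} [CommRing R]
    [DecidableEq σ] {i : σ} {p : MvPolynomial σ R}
    (h : aeval (Function.update (X : σ → MvPolynomial σ R) i 0) p ≠ 0) : ¬ X i ∣ p := by
  rintro ⟨q, rfl⟩
  simp at h

theorem MvPolynomial.isRelPrime_X_of_aeval_update_ne_zero {R σ : Type*} [CommRing R]
    [IsDomain R] [DecidableEq σ] {i : σ} {p : MvPolynomial σ R}
    (h : aeval (Function.update (X : σ → MvPolynomial σ R) i 0) p ≠ 0) : IsRelPrime (X i) p :=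
  X_prime.irreducible.isRelPrime_iff_not_dvd.2 (not_X_dvd_of_aeval_update_ne_zero h)

theorem stmt7 :
    IsRegularPair (R := MvPolynomial (Fin 2) ℚ)
      ((X 0) ^ 3 * (X 1) ^ 2) (X 0 * ((X 0) ^ 4 + (X 1) ^ 3) + X 1 * ((X 0) ^ 4 + (X 1) ^ 3)) := by
  refine isRegularPair_of_isRelPrime (by simp [X_ne_zero]) (IsRelPrime.mul_left ?_ ?_)
  · refine IsRelPrime.pow_left (isRelPrime_X_of_aeval_update_ne_zero ?_)
    simp [X_ne_zero]
  · refine IsRelPrime.pow_left (isRelPrime_X_of_aeval_update_ne_zero ?_)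
    simp [X_ne_zero]
end

section
/- If a₁,…,aₙ is a regular sequence of elements of positive degree in the polynomial ring ℚ[x₁,…,xₙ] (n variables), then the quotient ℚ[x₁,…,xₙ]/(a₁,…,aₙ) is a finite-dimensional ℚ-vector space. -/
/-!
Killing a non-zero-divisor lowers the Krull dimension by at least one, so the quotient of
`ℚ[x₁, …, xₙ]` (of dimension `n`) by a regular sequence of length `n` has dimension `≤ 0`.
A finitely generated algebra over a field of dimension `0` is Artinian, hence finite-dimensional.
-/

open MvPolynomial

/-- `a` is a regular sequence in the commutative ring `R`: for each `i`,
`a i` is a non-zero-divisor in the quotient of `R` by the ideal generated by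
the previous terms `a j`, `j < i`. -/
def IsRegularSeq {R : Type*} [CommRing R] {p : ℕ} (a : Fin p → R) : Prop :=
  ∀ i : Fin p, ∀ c : R,
    a i * c ∈ Ideal.span (a '' {j | j < i}) → c ∈ Ideal.span (a '' {j | j < i})

open scoped nonZeroDivisors

lemma ringKrullDim_quotient_sup_span_singleton_add_one_le {R : Type*} [CommRing R]
    {I : Ideal R} {x : R} (hx : Ideal.Quotient.mk I x ∈ (R ⧸ I)⁰) :
    ringKrullDim (R ⧸ (I ⊔ Ideal.span {x})) + 1 ≤ ringKrullDim (R ⧸ I) :=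
  ringKrullDim_succ_le_of_surjective (Ideal.Quotient.factor le_sup_left)
    (Ideal.Quotient.factor_surjective _) hx <| by
      rw [Ideal.Quotient.factor_mk, Ideal.Quotient.eq_zero_iff_mem]
      exact Ideal.mem_sup_right (Ideal.mem_span_singleton_self x)

lemma Ideal.span_image_val_lt_add_one {R : Type*} [CommRing R] {p : ℕ} (a : Fin p → R)
    (i : Fin p) :
    Ideal.span (a '' {j | (j : ℕ) < i + 1}) =
      Ideal.span (a '' {j | j < i}) ⊔ Ideal.span {a i} := by
  rw [← Ideal.span_union, ← Set.image_singleton, ← Set.image_union]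
  congr 2
  ext j
  simp only [Set.mem_ofPred_eq, Set.mem_union, Set.mem_singleton_iff, Fin.ext_iff, Fin.lt_def]
  omega

lemma WithBot.le_zero_of_add_natCast_le {d : WithBot ℕ∞} {n : ℕ} (h : d + n ≤ n) : d ≤ 0 := by
  induction d using WithBot.recBotCoe with
  | bot => exact bot_le
  | coe e =>
    norm_cast at h ⊢
    exact (ENat.add_le_add_iff_right (ENat.natCast_ne_top n)).mp (by simpa using h)

namespace IsRegularSeq

variable {R : Type*} [CommRing R] {p : ℕ} {a : Fin p → R}

lemma mk_mem_nonZeroDivisors (hreg : IsRegularSeq a) (i : Fin p) :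
    Ideal.Quotient.mk (Ideal.span (a '' {j | j < i})) (a i) ∈
      (R ⧸ Ideal.span (a '' {j | j < i}))⁰ := by
  refine mem_nonZeroDivisors_iff_right.mpr fun c hc => ?_
  obtain ⟨c, rfl⟩ := Ideal.Quotient.mk_surjective c
  rw [← map_mul, Ideal.Quotient.eq_zero_iff_mem, mul_comm] at hc
  exact Ideal.Quotient.eq_zero_iff_mem.mpr (hreg i c hc)

lemma ringKrullDim_quotient_span_image_val_lt_add_le (hreg : IsRegularSeq a) :
    ∀ k ≤ p, ringKrullDim (R ⧸ Ideal.span (a '' {j | (j : ℕ) < k})) + k ≤ ringKrullDim R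
  | 0, _ => by
    have hempty : a '' {j | (j : ℕ) < 0} = ∅ := by simp
    rw [hempty, Ideal.span_empty, Nat.cast_zero, add_zero]
    exact (ringKrullDim_eq_of_ringEquiv (RingEquiv.quotientBot R)).le
  | k + 1, hk => by
    have step := ringKrullDim_quotient_sup_span_singleton_add_one_le
      (hreg.mk_mem_nonZeroDivisors ⟨k, hk⟩)
    rw [← Ideal.span_image_val_lt_add_one, Fin.val_mk] at step
    calc _ = ringKrullDim (R ⧸ Ideal.span (a '' {j | (j : ℕ) < k + 1})) + 1 + k := by
            push_cast; ring
      _ ≤ ringKrullDim (R ⧸ Ideal.span (a '' {j | (j : ℕ) < k})) + k := by gcongr; exact step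
      _ ≤ ringKrullDim R := hreg.ringKrullDim_quotient_span_image_val_lt_add_le k (by omega)

lemma ringKrullDim_quotient_add_le (hreg : IsRegularSeq a) :
    ringKrullDim (R ⧸ Ideal.span (Set.range a)) + p ≤ ringKrullDim R := by
  have hall : {j : Fin p | (j : ℕ) < p} = Set.univ := Set.eq_univ_of_forall Fin.is_lt
  rw [← Set.image_univ, ← hall]
  exact hreg.ringKrullDim_quotient_span_image_val_lt_add_le p le_rfl

end IsRegularSeq

theorem stmt8_general (n : ℕ) (a : Fin n → MvPolynomial (Fin n) ℚ)
    (hreg : IsRegularSeq a) :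
    FiniteDimensional ℚ
      (MvPolynomial (Fin n) ℚ ⧸ Ideal.span (Set.range a)) := by
  have hdim : ringKrullDim (MvPolynomial (Fin n) ℚ) = n := by
    simp [ringKrullDim_eq_zero_of_field]
  have hquot := hreg.ringKrullDim_quotient_add_le
  rw [hdim] at hquot
  have : Ring.KrullDimLE 0 (MvPolynomial (Fin n) ℚ ⧸ Ideal.span (Set.range a)) :=
    Ring.krullDimLE_iff.mpr (WithBot.le_zero_of_add_natCast_le hquot)
  exact (Module.finite_iff_krullDimLE_zero ℚ _).mpr this

/-- If a₁,…,aₙ is a regular sequence of elements of positive degree (zero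
constant term) in ℚ[x₁,…,xₙ], then ℚ[x₁,…,xₙ]/(a₁,…,aₙ) is a
finite-dimensional ℚ-vector space. -/
theorem stmt8 (n : ℕ) (a : Fin n → MvPolynomial (Fin n) ℚ)
    (hconst : ∀ i, constantCoeff (a i) = 0)
    (hreg : IsRegularSeq a) :
    FiniteDimensional ℚ
      (MvPolynomial (Fin n) ℚ ⧸ Ideal.span (Set.range a)) :=
  stmt8_general n a hreg
end
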